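/- The cross-entropy loss of the Inhibited Softmax decomposes as l_IS(x,t) = l_S(x,t) − log P_a^c(x), where l_S is the standard softmax cross-entropy loss. -/
import Mathlib


theorem inhibited_softmax_loss_decomposition (n : ℕ) (x : Fin n → ℝ) (a : ℝ) (t : Fin n) :
    -Real.log (Real.exp (x t) / (∑ j, Real.exp (x j) + Real.exp a)) =
      -Real.log (Real.exp (x t) / ∑ j, Real.exp (x j)) -
        Real.log ((∑ j, Real.exp (x j)) / (∑ j, Real.exp (x j) + Real.exp a)) := by
  have hS : 0 < ∑ j, Real.exp (x j) :=
    Finset.sum_pos (fun j _ => Real.exp_pos _) ⟨t, Finset.mem_univ t⟩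
  have hSa : 0 < ∑ j, Real.exp (x j) + Real.exp a := by positivity
  rw [Real.log_div (Real.exp_ne_zero _) hSa.ne',
      Real.log_div (Real.exp_ne_zero _) hS.ne',
      Real.log_div hS.ne' hSa.ne']
  ring
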